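/- With notation as in the characterization theorem, if the spreading matrix X is invertible, then every nonzero entry of W(P) (and of each partial product W_k(P)) equals +1 or −1. -/
import Mathlib


open Matrix

/-- Binary representation of `i` as a vector in `F_2^n`, most significant bit first. -/
def bits (n : ℕ) (i : Fin (2 ^ n)) : Fin n → ZMod 2 :=
  fun k => if Nat.testBit i.val (n - 1 - k.val) then 1 else 0

/-- The vector `1_b = (0,...,0,1)ᵀ`. -/
def oneb (n : ℕ) : Fin n → ZMod 2 := fun k => if k.val = n - 1 then 1 else 0

/-- Permutation matrix `P(Q)` of the linear permutation `π(Q)`: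
entry `(j, i)` is `1` iff `j_b = Q i_b`. -/
def permMat (n : ℕ) (Q : Matrix (Fin n) (Fin n) (ZMod 2)) :
    Matrix (Fin (2 ^ n)) (Fin (2 ^ n)) ℤ :=
  Matrix.of fun j i => if bits n j = Q.mulVec (bits n i) then 1 else 0

/-- The array of butterflies `I_{2^{n-1}} ⊗ DFT_2`. -/
def butterflies (n : ℕ) : Matrix (Fin (2 ^ n)) (Fin (2 ^ n)) ℤ :=
  Matrix.of fun j i =>
    if j.val / 2 = i.val / 2 then (if j.val % 2 = 1 ∧ i.val % 2 = 1 then -1 else 1) else 0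

/-- `W(P) = P(P₀)·(I ⊗ DFT₂)·P(P₁) ⋯ (I ⊗ DFT₂)·P(Pₙ)`. -/
def W (n : ℕ) (P : ℕ → Matrix (Fin n) (Fin n) (ZMod 2)) :
    Matrix (Fin (2 ^ n)) (Fin (2 ^ n)) ℤ :=
  permMat n (P 0) * (List.ofFn fun k : Fin n => butterflies n * permMat n (P (k.val + 1))).prod

/-- `P_{i:j} = P_i P_{i+1} ⋯ P_j` (identity if `j < i`). -/
def Pseg {n : ℕ} (P : ℕ → Matrix (Fin n) (Fin n) (ZMod 2)) (i j : ℕ) :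
    Matrix (Fin n) (Fin n) (ZMod 2) :=
  ((List.range (j + 1 - i)).map fun k => P (i + k)).prod

/-- The spreading matrix `X = (P_{0:n-1}1_b | P_{0:n-2}1_b | ⋯ | P_0 1_b)`. -/
def spread (n : ℕ) (P : ℕ → Matrix (Fin n) (Fin n) (ZMod 2)) :
    Matrix (Fin n) (Fin n) (ZMod 2) :=
  Matrix.of fun r c => (Pseg P 0 (n - 1 - c.val)).mulVec (oneb n) r

/-- The matrix whose rows are `(P_{0:n-1}^{-T}1_b)ᵀ, ..., (P_0^{-T}1_b)ᵀ`. -/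
noncomputable def spreadInvRows (n : ℕ) (P : ℕ → Matrix (Fin n) (Fin n) (ZMod 2)) :
    Matrix (Fin n) (Fin n) (ZMod 2) :=
  Matrix.of fun r c => (Pseg P 0 (n - 1 - r.val))⁻¹.transpose.mulVec (oneb n) c

/-- The Hadamard matrix `H_n` with entries `(-1)^{⟨i_b, j_b⟩}`. -/
def hadamard (n : ℕ) : Matrix (Fin (2 ^ n)) (Fin (2 ^ n)) ℤ :=
  Matrix.of fun i j => (-1) ^ (∑ k, bits n i k * bits n j k).val

/-- The cyclic bit-rotation matrix `C_n`: ones on the superdiagonal and in the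
bottom-left corner. -/
def Cmat (n : ℕ) : Matrix (Fin n) (Fin n) (ZMod 2) :=
  Matrix.of fun k l => if l.val = k.val + 1 ∨ (k.val = n - 1 ∧ l.val = 0) then 1 else 0

/-- `W_k(P) = (I ⊗ DFT₂)·P(P_k) ⋯ (I ⊗ DFT₂)·P(Pₙ)`, the partial product of stages
`k, ..., n` (the identity for `k = n + 1`). -/
def Wk (n : ℕ) (P : ℕ → Matrix (Fin n) (Fin n) (ZMod 2)) (k : ℕ) :
    Matrix (Fin (2 ^ n)) (Fin (2 ^ n)) ℤ :=
  (List.ofFn fun t : Fin (n + 1 - k) => butterflies n * permMat n (P (k + t.val))).prod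

lemma bits_injective (n : ℕ) : Function.Injective (bits n) := by
  intro i j h
  apply Fin.val_injective
  apply Nat.eq_of_testBit_eq
  intro p
  by_cases hp : p < n
  · have hk : n - 1 - (n - 1 - p) = p := by omega
    have := congrFun h ⟨n - 1 - p, by omega⟩
    simp only [bits, hk] at this
    by_cases h1 : Nat.testBit i.val p <;> by_cases h2 : Nat.testBit j.val p <;> simp_all
  · rw [Nat.testBit_lt_two_pow, Nat.testBit_lt_two_pow] <;>
      exact lt_of_lt_of_le (Fin.is_lt _) (Nat.pow_le_pow_right (by norm_num) (by omega))

lemma bits_bijective (n : ℕ) : Function.Bijective (bits n) := by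
  rw [Fintype.bijective_iff_injective_and_card]
  refine ⟨bits_injective n, ?_⟩
  rw [Fintype.card_fun]
  simp

noncomputable def bitsEquiv (n : ℕ) : Fin (2 ^ n) ≃ (Fin n → ZMod 2) :=
  Equiv.ofBijective _ (bits_bijective n)

lemma bitsEquiv_apply (n : ℕ) (i : Fin (2 ^ n)) : bitsEquiv n i = bits n i := rfl

lemma bits_symm (n : ℕ) (v : Fin n → ZMod 2) : bits n ((bitsEquiv n).symm v) = v :=
  (bitsEquiv n).apply_symm_apply v

lemma mul_permMat (n : ℕ) (Q : Matrix (Fin n) (Fin n) (ZMod 2))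
    (A : Matrix (Fin (2 ^ n)) (Fin (2 ^ n)) ℤ) (j i : Fin (2 ^ n)) :
    (A * permMat n Q) j i = A j ((bitsEquiv n).symm (Q.mulVec (bits n i))) := by
  rw [Matrix.mul_apply]
  have key : ∀ m : Fin (2 ^ n),
      A j m * permMat n Q m i
        = if m = (bitsEquiv n).symm (Q.mulVec (bits n i)) then A j m else 0 := by
    intro m
    have hiff : (bits n m = Q.mulVec (bits n i)) ↔ m = (bitsEquiv n).symm (Q.mulVec (bits n i)) := by
      constructor
      · intro h
        apply (bitsEquiv n).injective
        rw [Equiv.apply_symm_apply, bitsEquiv_apply, h]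
      · intro h; subst h; rw [bits_symm]
    simp only [permMat, Matrix.of_apply]
    rw [mul_ite, mul_one, mul_zero]
    exact if_congr hiff rfl rfl
  simp_rw [key, Finset.sum_ite_eq']
  simp

lemma permMat_mul (n : ℕ) (Q : Matrix (Fin n) (Fin n) (ZMod 2)) (hQ : IsUnit Q)
    (A : Matrix (Fin (2 ^ n)) (Fin (2 ^ n)) ℤ) (j i : Fin (2 ^ n)) :
    (permMat n Q * A) j i = A ((bitsEquiv n).symm (Q⁻¹.mulVec (bits n j))) i := by
  have hdet := (Matrix.isUnit_iff_isUnit_det Q).mp hQ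
  rw [Matrix.mul_apply]
  have key : ∀ m : Fin (2 ^ n),
      permMat n Q j m * A m i
        = if m = (bitsEquiv n).symm (Q⁻¹.mulVec (bits n j)) then A m i else 0 := by
    intro m
    have hiff : (bits n j = Q.mulVec (bits n m)) ↔ m = (bitsEquiv n).symm (Q⁻¹.mulVec (bits n j)) := by
      constructor
      · intro h
        apply (bitsEquiv n).injective
        rw [Equiv.apply_symm_apply, bitsEquiv_apply, h, Matrix.mulVec_mulVec,
          Matrix.nonsing_inv_mul Q hdet, Matrix.one_mulVec]
      · intro h
        subst h
        rw [bits_symm, Matrix.mulVec_mulVec, Matrix.mul_nonsing_inv Q hdet, Matrix.one_mulVec]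
    simp only [permMat, Matrix.of_apply]
    rw [ite_mul, one_mul, zero_mul]
    exact if_congr hiff rfl rfl
  simp_rw [key, Finset.sum_ite_eq']
  simp

lemma bits_pair (n : ℕ) (m j : Fin (2 ^ n)) (hdiv : m.val / 2 = j.val / 2) (hne : m ≠ j) :
    bits n m = bits n j + oneb n := by
  have hn : 1 ≤ n := by
    by_contra h
    have : n = 0 := by omega
    subst this
    exact hne (by omega)
  funext k
  by_cases hk : k.val = n - 1
  · have h0 : n - 1 - k.val = 0 := by omega
    have hmod : m.val % 2 ≠ j.val % 2 := by
      intro h; exact hne (Fin.val_injective (by omega))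
    simp only [bits, oneb, Pi.add_apply, h0, if_pos hk, Nat.testBit_zero]
    have hm2 := Nat.mod_two_eq_zero_or_one m.val
    have hj2 := Nat.mod_two_eq_zero_or_one j.val
    rcases hm2 with h1 | h1 <;> rcases hj2 with h2 | h2 <;>
      simp only [h1, h2] at hmod ⊢ <;> first | exact absurd rfl hmod | decide
  · obtain ⟨p, hp⟩ : ∃ p, n - 1 - k.val = p + 1 := ⟨n - 1 - k.val - 1, by omega⟩
    simp only [bits, oneb, Pi.add_apply, if_neg hk, add_zero, hp, Nat.testBit_succ, hdiv]

lemma butterflies_mul (n : ℕ) (hn : 1 ≤ n) (A : Matrix (Fin (2 ^ n)) (Fin (2 ^ n)) ℤ)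
    (j i : Fin (2 ^ n)) :
    ∃ m₀ m₁ : Fin (2 ^ n), ∃ s : ℤ, (s = 1 ∨ s = -1) ∧ m₀ ≠ m₁ ∧
      m₀.val / 2 = j.val / 2 ∧ m₁.val / 2 = j.val / 2 ∧
      (butterflies n * A) j i = A m₀ i + s * A m₁ i := by
  have h2 : 2 ∣ 2 ^ n := dvd_pow_self 2 (by omega)
  have hj := j.is_lt
  have he1 : 2 * (j.val / 2) < 2 ^ n := by omega
  have he2 : 2 * (j.val / 2) + 1 < 2 ^ n := by omega
  refine ⟨⟨2 * (j.val / 2), he1⟩, ⟨2 * (j.val / 2) + 1, he2⟩,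
    (if j.val % 2 = 1 then -1 else 1), ?_, ?_, ?_, ?_, ?_⟩
  · by_cases h : j.val % 2 = 1 <;> simp [h]
  · intro h
    have : 2 * (j.val / 2) = 2 * (j.val / 2) + 1 := congrArg Fin.val h
    omega
  · show 2 * (j.val / 2) / 2 = j.val / 2; omega
  · show (2 * (j.val / 2) + 1) / 2 = j.val / 2; omega
  · set m₀ : Fin (2 ^ n) := ⟨2 * (j.val / 2), he1⟩ with hm₀
    set m₁ : Fin (2 ^ n) := ⟨2 * (j.val / 2) + 1, he2⟩ with hm₁
    rw [Matrix.mul_apply]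
    have key : ∀ m : Fin (2 ^ n), butterflies n j m * A m i =
        (if m = m₀ then A m₀ i else 0)
          + (if m = m₁ then (if j.val % 2 = 1 then (-1 : ℤ) else 1) * A m₁ i else 0) := by
      intro m
      rcases eq_or_ne m m₀ with h0 | h0
      · have hv : m.val = 2 * (j.val / 2) := by rw [h0]
        have hne : m ≠ m₁ := by
          intro h
          have : m.val = 2 * (j.val / 2) + 1 := congrArg Fin.val h
          omega
        have hB : butterflies n j m = 1 := by
          simp only [butterflies, Matrix.of_apply, hv]
          rw [if_pos (by omega), if_neg (by omega)]
        rw [hB, if_pos h0, if_neg hne, one_mul, add_zero, h0]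
      · rcases eq_or_ne m m₁ with h1 | h1
        · have hv : m.val = 2 * (j.val / 2) + 1 := congrArg Fin.val h1
          have hB : butterflies n j m = (if j.val % 2 = 1 then (-1 : ℤ) else 1) := by
            simp only [butterflies, Matrix.of_apply, hv]
            rw [if_pos (by omega)]
            by_cases hj2 : j.val % 2 = 1
            · rw [if_pos ⟨hj2, by omega⟩, if_pos hj2]
            · rw [if_neg (by tauto), if_neg hj2]
          rw [hB, if_neg h0, if_pos h1, zero_add, h1]
        · have h0' : m.val ≠ 2 * (j.val / 2) := by
            intro h; exact h0 (Fin.val_injective h)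
          have h1' : m.val ≠ 2 * (j.val / 2) + 1 := by
            intro h; exact h1 (Fin.val_injective h)
          have hB : butterflies n j m = 0 := by
            simp only [butterflies, Matrix.of_apply]
            rw [if_neg (by omega)]
          rw [hB, if_neg h0, if_neg h1, zero_mul, add_zero]
    simp_rw [key, Finset.sum_add_distrib, Finset.sum_ite_eq']
    simp

lemma Pseg_nil {n : ℕ} (P : ℕ → Matrix (Fin n) (Fin n) (ZMod 2)) (i j : ℕ) (h : j + 1 ≤ i) :
    Pseg P i j = 1 := by
  have : j + 1 - i = 0 := by omega
  simp [Pseg, this]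

lemma Pseg_single {n : ℕ} (P : ℕ → Matrix (Fin n) (Fin n) (ZMod 2)) (k : ℕ) :
    Pseg P k k = P k := by
  have : k + 1 - k = 1 := by omega
  simp [Pseg, this, List.range_succ]

lemma Pseg_split {n : ℕ} (P : ℕ → Matrix (Fin n) (Fin n) (ZMod 2)) (i j m : ℕ)
    (h1 : i ≤ j + 1) (h2 : j ≤ m) :
    Pseg P i j * Pseg P (j + 1) m = Pseg P i m := by
  unfold Pseg
  have hlen : m + 1 - i = (j + 1 - i) + (m - j) := by omega
  have hlen2 : m + 1 - (j + 1) = m - j := by omega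
  rw [hlen2, hlen, List.range_add, List.map_append, List.prod_append, List.map_map]
  congr 1
  apply congrArg List.prod
  symm
  apply List.map_congr_left
  intro a _
  simp only [Function.comp_apply]
  have h : i + (j + 1 - i + a) = j + 1 + a := by omega
  rw [h]

lemma Pseg_cons {n : ℕ} (P : ℕ → Matrix (Fin n) (Fin n) (ZMod 2)) (k m : ℕ) (h : k ≤ m) :
    Pseg P k m = P k * Pseg P (k + 1) m := by
  rw [← Pseg_split P k k m (by omega) h, Pseg_single]

def uvec {n : ℕ} (P : ℕ → Matrix (Fin n) (Fin n) (ZMod 2)) (k m : ℕ) : Fin n → ZMod 2 :=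
  (Pseg P k m).mulVec (oneb n)

def Vspan {n : ℕ} (P : ℕ → Matrix (Fin n) (Fin n) (ZMod 2)) (k : ℕ) :
    Submodule (ZMod 2) (Fin n → ZMod 2) :=
  Submodule.span (ZMod 2) (uvec P k '' Set.Ico (k - 1) n)

lemma oneb_mem_Vspan {n : ℕ} (P : ℕ → Matrix (Fin n) (Fin n) (ZMod 2)) (k : ℕ)
    (hk1 : 1 ≤ k) (hkn : k ≤ n) : oneb n ∈ Vspan P k := by
  apply Submodule.subset_span
  refine ⟨k - 1, ⟨le_refl _, by omega⟩, ?_⟩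
  rw [uvec, Pseg_nil P k (k-1) (by omega), Matrix.one_mulVec]

lemma mulVec_Vspan {n : ℕ} (P : ℕ → Matrix (Fin n) (Fin n) (ZMod 2)) (k : ℕ)
    (hk1 : 1 ≤ k) (hkn : k ≤ n) (x : Fin n → ZMod 2) (hx : x ∈ Vspan P (k + 1)) :
    (P k).mulVec x ∈ Vspan P k := by
  have hmap : (P k).mulVecLin x ∈ Submodule.map (P k).mulVecLin (Vspan P (k + 1)) :=
    Submodule.mem_map_of_mem hx
  rw [Vspan, Submodule.map_span] at hmap
  refine Submodule.span_mono ?_ hmap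
  rintro y ⟨z, ⟨m, ⟨hm1, hm2⟩, rfl⟩, rfl⟩
  refine ⟨m, ⟨by omega, hm2⟩, ?_⟩
  simp only [uvec, Matrix.mulVecLin_apply, Matrix.mulVec_mulVec]
  rw [← Pseg_cons P k m (by omega)]

lemma z2_cancel : ∀ x y z : ZMod 2, (x + y) + (x + z) = y + z := by decide

lemma z2_flip : ∀ x y o : ZMod 2, x + y = (x + (y + o)) + o := by decide

lemma z2_pair : ∀ x y : ZMod 2, x + (x + y) = y := by decide

lemma Wk_eq (n : ℕ) (P : ℕ → Matrix (Fin n) (Fin n) (ZMod 2)) (k d : ℕ) (h : n + 1 - k = d) :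
    Wk n P k = (List.ofFn fun t : Fin d => butterflies n * permMat n (P (k + t.val))).prod := by
  subst h; rfl

lemma Wk_top (n : ℕ) (P : ℕ → Matrix (Fin n) (Fin n) (ZMod 2)) : Wk n P (n + 1) = 1 := by
  rw [Wk_eq n P (n + 1) 0 (by omega)]
  simp

lemma Wk_succ (n : ℕ) (P : ℕ → Matrix (Fin n) (Fin n) (ZMod 2)) (k : ℕ) (hk : k ≤ n) :
    Wk n P k = butterflies n * (permMat n (P k) * Wk n P (k + 1)) := by
  have harg : ∀ i : Fin (n - k), k + (i.val + 1) = k + 1 + i.val := fun i => by omega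
  rw [Wk_eq n P k ((n - k) + 1) (by omega), List.ofFn_succ, List.prod_cons,
      Wk_eq n P (k + 1) (n - k) (by omega), mul_assoc]
  simp only [Fin.val_succ, Fin.val_zero, Nat.add_zero, harg]

lemma no_overlap (n : ℕ) (P : ℕ → Matrix (Fin n) (Fin n) (ZMod 2))
    (hP : ∀ k ≤ n, IsUnit (P k)) (hX : IsUnit (spread n P)) (k : ℕ)
    (hk1 : 1 ≤ k) (hkn : k ≤ n)
    (h : (P k)⁻¹.mulVec (oneb n) ∈ Vspan P (k + 1)) : False := by
  have hdet : IsUnit (P k).det := (Matrix.isUnit_iff_isUnit_det _).mp (hP k hkn)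
  have hmap : (Pseg P 0 k).mulVecLin ((P k)⁻¹.mulVec (oneb n)) ∈
      Submodule.map (Pseg P 0 k).mulVecLin (Vspan P (k + 1)) := Submodule.mem_map_of_mem h
  rw [Vspan, Submodule.map_span] at hmap
  have hL : (Pseg P 0 k).mulVecLin ((P k)⁻¹.mulVec (oneb n)) = uvec P 0 (k - 1) := by
    have hsplit : Pseg P 0 (k - 1) * P k = Pseg P 0 k := by
      have h2 := Pseg_split P 0 (k - 1) k (by omega) (by omega)
      rwa [(show k - 1 + 1 = k by omega), Pseg_single] at h2
    rw [Matrix.mulVecLin_apply, Matrix.mulVec_mulVec, ← hsplit, mul_assoc,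
        Matrix.mul_nonsing_inv _ hdet, mul_one]
    rfl
  rw [hL] at hmap
  set v : Fin n → (Fin n → ZMod 2) := fun c => (spread n P)ᵀ c with hv
  have hli : LinearIndependent (ZMod 2) v := Matrix.linearIndependent_cols_iff_isUnit.mpr hX
  have huv : ∀ m, m < n → uvec P 0 m = v ⟨n - 1 - m, by omega⟩ := by
    intro m hm
    funext r
    have hidx : n - 1 - (n - 1 - m) = m := by omega
    show (Pseg P 0 m).mulVec (oneb n) r = (Pseg P 0 (n - 1 - (n - 1 - m))).mulVec (oneb n) r
    rw [hidx]
  have hnk : (⟨n - k, by omega⟩ : Fin n) ∉ {c : Fin n | c.val < n - k} := by simp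
  apply hli.notMem_span_image hnk
  have hfin : (⟨n - 1 - (k - 1), by omega⟩ : Fin n) = (⟨n - k, by omega⟩ : Fin n) :=
    Fin.ext (show n - 1 - (k - 1) = n - k by omega)
  have h1 : uvec P 0 (k - 1) = v ⟨n - k, by omega⟩ := by
    rw [huv (k - 1) (by omega), hfin]
  rw [← h1]
  refine Submodule.span_mono ?_ hmap
  rintro y ⟨z, ⟨m, ⟨hm1, hm2⟩, rfl⟩, rfl⟩
  have hm1' : k ≤ m := by omega
  refine ⟨⟨n - 1 - m, by omega⟩, ?_, ?_⟩
  · show (n - 1 - m : ℕ) < n - k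
    omega
  · rw [← huv m hm2]
    rw [Matrix.mulVecLin_apply, uvec, uvec, Matrix.mulVec_mulVec,
        Pseg_split P 0 k m (by omega) hm1']

lemma good (n : ℕ) (P : ℕ → Matrix (Fin n) (Fin n) (ZMod 2))
    (hP : ∀ k ≤ n, IsUnit (P k)) (hX : IsUnit (spread n P)) :
    ∀ d, d ≤ n → ∀ j i : Fin (2 ^ n),
      (Wk n P (n + 1 - d) j i = 0 ∨ Wk n P (n + 1 - d) j i = 1 ∨ Wk n P (n + 1 - d) j i = -1) ∧
      (Wk n P (n + 1 - d) j i ≠ 0 →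
        (Pseg P (n + 1 - d) n).mulVec (bits n i) + bits n j ∈ Vspan P (n + 1 - d)) := by
  intro d
  induction d with
  | zero =>
    intro _ j i
    have h0 : n + 1 - 0 = n + 1 := rfl
    rw [h0, Wk_top]
    constructor
    · by_cases hji : j = i
      · subst hji; right; left; exact Matrix.one_apply_eq j
      · left; exact Matrix.one_apply_ne hji
    · intro hne
      by_cases hji : j = i
      · subst hji
        rw [Pseg_nil P (n + 1) n (by omega), Matrix.one_mulVec]
        have hz : bits n j + bits n j = 0 := by
          funext r; exact CharTwo.add_self_eq_zero _
        rw [hz]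
        exact Submodule.zero_mem _
      · exact absurd (Matrix.one_apply_ne hji) hne
  | succ d IH =>
    intro hd j i
    set k := n - d with hkdef
    have hk : n + 1 - (d + 1) = k := by omega
    have hk2 : n + 1 - d = k + 1 := by omega
    have hn1 : 1 ≤ n := by omega
    have hk1 : 1 ≤ k := by omega
    have hkn : k ≤ n := by omega
    have hdet : IsUnit (P k).det := (Matrix.isUnit_iff_isUnit_det _).mp (hP k hkn)
    rw [hk]
    rw [hk2] at IH
    have IH' := IH (by omega)
    rw [Wk_succ n P k hkn]
    obtain ⟨m₀, m₁, s, hs, hm01, hd0, hd1, hmul⟩ :=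
      butterflies_mul n hn1 (permMat n (P k) * Wk n P (k + 1)) j i
    rw [hmul, permMat_mul n (P k) (hP k hkn), permMat_mul n (P k) (hP k hkn)]
    set l₀ := (bitsEquiv n).symm ((P k)⁻¹.mulVec (bits n m₀)) with hl₀
    set l₁ := (bitsEquiv n).symm ((P k)⁻¹.mulVec (bits n m₁)) with hl₁
    have hbl₀ : bits n l₀ = (P k)⁻¹.mulVec (bits n m₀) := bits_symm n _
    have hbl₁ : bits n l₁ = (P k)⁻¹.mulVec (bits n m₁) := bits_symm n _
    -- at most one of the two contributions is nonzero
    have hdisj : Wk n P (k + 1) l₀ i = 0 ∨ Wk n P (k + 1) l₁ i = 0 := by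
      by_contra hcon
      push_neg at hcon
      obtain ⟨h0, h1⟩ := hcon
      have hv0 := (IH' l₀ i).2 h0
      have hv1 := (IH' l₁ i).2 h1
      have hbm : bits n m₁ = bits n m₀ + oneb n := bits_pair n m₁ m₀ (by omega) (Ne.symm hm01)
      have hbl : bits n l₀ + bits n l₁ = (P k)⁻¹.mulVec (oneb n) := by
        have hv : bits n m₀ + (bits n m₀ + oneb n) = oneb n := by
          funext r; exact z2_pair _ _
        rw [hbl₀, hbl₁, ← Matrix.mulVec_add, hbm, hv]
      have hsum : (P k)⁻¹.mulVec (oneb n) ∈ Vspan P (k + 1) := by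
        have hadd := Submodule.add_mem _ hv0 hv1
        have heq : (Pseg P (k + 1) n).mulVec (bits n i) + bits n l₀
            + ((Pseg P (k + 1) n).mulVec (bits n i) + bits n l₁)
            = (P k)⁻¹.mulVec (oneb n) := by
          rw [← hbl]
          funext r
          exact z2_cancel _ _ _
        rwa [heq] at hadd
      exact no_overlap n P hP hX k hk1 hkn hsum
    -- transport of the membership invariant
    have hstep : ∀ (l m' : Fin (2 ^ n)), bits n l = (P k)⁻¹.mulVec (bits n m') →
        m'.val / 2 = j.val / 2 → Wk n P (k + 1) l i ≠ 0 →
        (Pseg P k n).mulVec (bits n i) + bits n j ∈ Vspan P k := by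
      intro l m' hbl hdiv hne
      have hmem := (IH' l i).2 hne
      have happ := mulVec_Vspan P k hk1 hkn _ hmem
      rw [Matrix.mulVec_add, Matrix.mulVec_mulVec, ← Pseg_cons P k n hkn, hbl,
          Matrix.mulVec_mulVec, Matrix.mul_nonsing_inv _ hdet, Matrix.one_mulVec] at happ
      rcases eq_or_ne m' j with rfl | hne'
      · exact happ
      · have hbm : bits n m' = bits n j + oneb n := bits_pair n m' j hdiv hne'
        rw [hbm] at happ
        have honeb := oneb_mem_Vspan P k hk1 hkn
        have hadd := Submodule.add_mem _ happ honeb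
        have heq : (Pseg P k n).mulVec (bits n i) + (bits n j + oneb n) + oneb n
            = (Pseg P k n).mulVec (bits n i) + bits n j := by
          funext r
          exact (z2_flip _ _ _).symm
        rwa [heq] at hadd
    constructor
    · rcases hdisj with h0 | h1
      · rcases (IH' l₁ i).1 with hz | hz | hz <;> rcases hs with hs | hs <;>
          rw [h0, hz, hs] <;> norm_num
      · rcases (IH' l₀ i).1 with hz | hz | hz <;> rcases hs with hs | hs <;>
          rw [h1, hz, hs] <;> norm_num
    · intro hne
      rcases hdisj with h0 | h1
      · have h1ne : Wk n P (k + 1) l₁ i ≠ 0 := by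
          intro hz; rw [h0, hz] at hne; simp at hne
        exact hstep l₁ m₁ hbl₁ hd1 h1ne
      · have h0ne : Wk n P (k + 1) l₀ i ≠ 0 := by
          intro hz; rw [h1, hz] at hne; simp at hne
        exact hstep l₀ m₀ hbl₀ hd0 h0ne

/-- If the spreading matrix is invertible, every nonzero entry of `W(P)` and of each
partial product `W_k(P)` equals `+1` or `−1`. -/
theorem entries_pm_one (n : ℕ) (P : ℕ → Matrix (Fin n) (Fin n) (ZMod 2))
    (hP : ∀ k ≤ n, IsUnit (P k)) (hX : IsUnit (spread n P)) :
    (∀ j i : Fin (2 ^ n), W n P j i = 0 ∨ W n P j i = 1 ∨ W n P j i = -1) ∧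
    (∀ k, 1 ≤ k → k ≤ n → ∀ j i : Fin (2 ^ n),
      Wk n P k j i = 0 ∨ Wk n P k j i = 1 ∨ Wk n P k j i = -1) := by
  have hgood := good n P hP hX
  constructor
  · intro j i
    have hW : W n P = permMat n (P 0) * Wk n P 1 := by
      unfold W
      congr 1
      rw [Wk_eq n P 1 n rfl]
      have harg : ∀ t : Fin n, (1 : ℕ) + t.val = t.val + 1 := fun t => by omega
      simp only [harg]
    rw [hW, permMat_mul n (P 0) (hP 0 (Nat.zero_le n))]
    have h := (hgood n (le_refl n) ((bitsEquiv n).symm ((P 0)⁻¹.mulVec (bits n j))) i).1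
    rwa [show n + 1 - n = 1 by omega] at h
  · intro k hk1 hkn j i
    have h := (hgood (n + 1 - k) (by omega) j i).1
    rwa [show n + 1 - (n + 1 - k) = k by omega] at h
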